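/- Let q = 2^h, h > p, r ≥ p, and r ≤ m. The minimum Hamming distance of the linear code ZRM_{2^h}^p(r,m) equals 2^{m-r}; that is, every nonzero codeword has Hamming weight at least 2^{m-r}, and some nonzero codeword has Hamming weight exactly 2^{m-r}. -/

import Mathlib

open Finset

/-- The binary expansion of `i`, as a point of `ℤ₂^m`. -/
def bits (m : ℕ) (i : ℕ) : Fin m → ZMod 2 := fun j => if Nat.testBit i j.val then 1 else 0

/-- Admissibility condition on ANF coefficients for `ZRM_{2^h}^p(r,m)`: monomials of order
at most `r - p` are free, a monomial of order `r - p + i` (for `1 ≤ i ≤ p`) must carry a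
coefficient divisible by `2^i`, and monomials of order exceeding `r` do not occur. -/
def zrmCond (h p r m : ℕ) (c : Finset (Fin m) → ZMod (2 ^ h)) : Prop :=
  ∀ S : Finset (Fin m),
    (r < S.card → c S = 0) ∧
    (r - p < S.card → S.card ≤ r →
      ∃ u : ZMod (2 ^ h), c S = 2 ^ (S.card - (r - p)) * u)

/-- The `ℤ_{2^h}`-valued vector of length `2^m` associated with the generalized Boolean
function with ANF coefficients `c` (monomials indexed by subsets of the variables). -/
def anfVec (h m : ℕ) (c : Finset (Fin m) → ZMod (2 ^ h)) : Fin (2 ^ m) → ZMod (2 ^ h) :=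
  fun i => ∑ S : Finset (Fin m), c S * ∏ α ∈ S, ((bits m i.val α).val : ZMod (2 ^ h))

/-- The code `ZRM_{2^h}^p(r,m)` as a set of vectors of length `2^m` over `ℤ_{2^h}`. -/
def ZRM (h p r m : ℕ) : Set (Fin (2 ^ m) → ZMod (2 ^ h)) :=
  {v | ∃ c : Finset (Fin m) → ZMod (2 ^ h), zrmCond h p r m c ∧ v = anfVec h m c}

/-- Hamming weight: the number of nonzero entries. -/
def wtH {n q : ℕ} (v : Fin n → ZMod q) : ℕ := (Finset.univ.filter fun i => v i ≠ 0).card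

/-- Lee weight: `∑ᵢ min(vᵢ, q - vᵢ)` with entries represented in `[0, q)`. -/
def wtL {n q : ℕ} (v : Fin n → ZMod q) : ℕ := ∑ i : Fin n, min (v i).val (q - (v i).val)

/-!
Write a codeword as `f(A) = ∑_{T ⊆ A} c_T`, a point of the cube being encoded by its support `A`,
and let `S` be a monomial of maximal size with `c_S ≠ 0`, so `|S| ≤ r`. On each face
`{Z ∪ U | U ⊆ S}` with `Z ∩ S = ∅` the restriction of `f` still has top coefficient `c_S`, so by
Möbius inversion on the face it does not vanish identically; the `2^(m - |S|)` disjoint faces give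
at least `2^(m - r)` nonzero entries. This works over any coefficient monoid. Conversely, with
`|S| = r`, the codeword `2^p ∏_{α ∈ S} x_α` lies in the code, is nonzero because `p < h`, and is
nonzero exactly on the `2^(m - r)` supersets of `S`.
-/

section AnfEval

variable {α M : Type*} [DecidableEq α] [AddCommMonoid M]

/-- A point of the Boolean cube is encoded by its support `A`; the monomial `∏_{α ∈ T} x_α`
takes the value `1` there iff `T ⊆ A`. -/
def anfEval (c : Finset α → M) (A : Finset α) : M := ∑ T ∈ A.powerset, c T

theorem anfEval_insert {c : Finset α → M} {a : α} {A : Finset α} (ha : a ∉ A) :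
    anfEval c (insert a A) = anfEval (fun T => c T + c (insert a T)) A := by
  simp only [anfEval, sum_powerset_insert ha, sum_add_distrib]

theorem eq_zero_of_anfEval_eq_zero {c : Finset α → M} {S : Finset α}
    (h : ∀ U ⊆ S, anfEval c U = 0) : c S = 0 := by
  suffices ∀ U ⊆ S, c U = 0 from this S subset_rfl
  intro U
  induction U using Finset.strongInduction with
  | H U ih =>
    intro hU
    have hproper : ∀ T ∈ U.powerset.erase U, c T = 0 := fun T hT =>
      have hTU : T ⊆ U := mem_powerset.1 (mem_of_mem_erase hT)
      ih T (Finset.ssubset_iff_subset_ne.2 ⟨hTU, ne_of_mem_erase hT⟩) (hTU.trans hU)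
    simpa [anfEval, ← sum_erase_add _ _ (mem_powerset_self U), sum_eq_zero hproper] using h U hU

theorem eq_zero_of_anfEval_union_eq_zero {c : Finset α → M} {S Z : Finset α}
    (hmax : ∀ T, S ⊂ T → c T = 0) (hZ : Disjoint Z S)
    (h : ∀ U ⊆ S, anfEval c (Z ∪ U) = 0) : c S = 0 := by
  induction Z using Finset.induction_on generalizing c with
  | empty => exact eq_zero_of_anfEval_eq_zero (by simpa using h)
  | insert a Z haZ ih =>
    -- Fixing `x_a = 1` turns `c` into `T ↦ c T + c (T ∪ {a})`, which still has `S` as a maximal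
    -- monomial with the same coefficient.
    have haS : a ∉ S := disjoint_left.1 hZ (mem_insert_self a Z)
    have hcoeff := ih (c := fun T => c T + c (insert a T))
      (fun T hT => by simp [hmax T hT, hmax _ (hT.trans_subset (subset_insert a T))])
      (disjoint_of_subset_left (subset_insert a Z) hZ)
      (fun U hU => by
        rw [← anfEval_insert, ← insert_union]
        · exact h U hU
        · simp only [mem_union, not_or]
          exact ⟨haZ, fun h => haS (hU h)⟩)
    simpa [hmax _ (ssubset_insert haS)] using hcoeff

theorem two_pow_sub_le_card_anfEval_ne_zero [Fintype α] [DecidableEq M] {c : Finset α → M} {r : ℕ}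
    (hdeg : ∀ T, r < #T → c T = 0) (hc : c ≠ 0) :
    2 ^ (Fintype.card α - r) ≤ #{A | anfEval c A ≠ 0} := by
  obtain ⟨S₁, hS₁⟩ := Function.ne_iff.1 hc
  obtain ⟨S, hS, hSmax⟩ := exists_max_image {T | c T ≠ 0} card ⟨S₁, by simpa using hS₁⟩
  rw [mem_filter] at hS
  have hmax : ∀ T, S ⊂ T → c T = 0 := fun T hT => by
    by_contra hT'
    exact (card_lt_card hT).not_ge (hSmax T (by simpa using hT'))
  have hSr : #S ≤ r := by
    by_contra hr
    exact hS.2 (hdeg S (by omega))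
  have hsurj : Set.SurjOn (· \ S) (({A | anfEval c A ≠ 0} : Finset (Finset α)) : Set (Finset α))
      (Sᶜ.powerset : Set (Finset α)) := by
    intro Z hZ
    have hZS : Disjoint Z S := subset_compl_iff_disjoint_right.1 (mem_powerset.1 hZ)
    obtain ⟨U, hU, hne⟩ : ∃ U ⊆ S, anfEval c (Z ∪ U) ≠ 0 := by
      by_contra! hall
      exact hS.2 (eq_zero_of_anfEval_union_eq_zero hmax hZS hall)
    refine ⟨Z ∪ U, by simpa using hne, ?_⟩
    simp [union_sdiff_distrib, sdiff_eq_empty_iff_subset.2 hU, hZS.sdiff_eq_left]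
  calc 2 ^ (Fintype.card α - r) ≤ 2 ^ (Fintype.card α - #S) :=
        Nat.pow_le_pow_right two_pos (by omega)
    _ = #Sᶜ.powerset := by rw [card_powerset, card_compl]
    _ ≤ _ := card_le_card_of_surjOn _ hsurj

theorem card_superset_eq [Fintype α] (S : Finset α) :
    #{A | S ⊆ A} = 2 ^ (Fintype.card α - #S) := by
  rw [← card_compl, ← card_powerset]
  refine card_nbij' (· \ S) (· ∪ S) ?_ ?_ ?_ ?_
  · intro A _
    simp
  · intro Z _
    simp
  · intro A hA
    simpa using (mem_filter.1 hA).2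
  · intro Z hZ
    simpa [union_sdiff_right] using
      (subset_compl_iff_disjoint_right.1 (mem_powerset.1 hZ)).sdiff_eq_left

end AnfEval

def bitSet (m i : ℕ) : Finset (Fin m) := {α | i.testBit α}

theorem bitSet_bijective (m : ℕ) : Function.Bijective fun i : Fin (2 ^ m) => bitSet m i := by
  refine (Fintype.bijective_iff_injective_and_card _).2 ⟨fun i j hij => ?_, by simp⟩
  refine Fin.ext (Nat.eq_of_testBit_eq fun k => ?_)
  by_cases hk : k < m
  · simpa [bitSet] using congrArg (⟨k, hk⟩ ∈ ·) hij
  · have hle : 2 ^ m ≤ 2 ^ k := Nat.pow_le_pow_right two_pos (by omega)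
    rw [Nat.testBit_lt_two_pow (i.isLt.trans_le hle), Nat.testBit_lt_two_pow (j.isLt.trans_le hle)]

theorem prod_bits_val_eq {R : Type*} [CommSemiring R] (m i : ℕ) (T : Finset (Fin m)) :
    ∏ α ∈ T, ((bits m i α).val : R) = if T ⊆ bitSet m i then 1 else 0 := by
  have hbit : ∀ α, ((bits m i α).val : R) = if α ∈ bitSet m i then 1 else 0 := fun α => by
    by_cases h : i.testBit α <;> simp [bits, bitSet, h, (by decide : (1 : ZMod 2).val = 1)]
  simp only [hbit, prod_boole]
  by_cases hT : T ⊆ bitSet m i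
  · rw [if_pos hT]
    exact if_pos hT
  · rw [if_neg hT]
    exact if_neg hT

theorem anfVec_apply (h m : ℕ) (c : Finset (Fin m) → ZMod (2 ^ h)) (i : Fin (2 ^ m)) :
    anfVec h m c i = anfEval c (bitSet m i) := by
  simp only [anfVec, prod_bits_val_eq, mul_boole, ← sum_filter, anfEval]
  congr 1
  ext T
  simp

theorem wtH_anfVec (h m : ℕ) (c : Finset (Fin m) → ZMod (2 ^ h)) :
    wtH (anfVec h m c) = #{A | anfEval c A ≠ 0} :=
  card_equiv (Equiv.ofBijective _ (bitSet_bijective m)) fun i => by simp [anfVec_apply]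

theorem zrmCond_single (h p r m : ℕ) {S : Finset (Fin m)} (hS : #S ≤ r) :
    zrmCond h p r m (Pi.single S (2 ^ p)) := by
  intro T
  by_cases hT : T = S
  · subst hT
    refine ⟨fun hr => absurd hS (by omega), fun _ _ => ⟨2 ^ (p - (#T - (r - p))), ?_⟩⟩
    rw [Pi.single_eq_same, ← pow_add]
    congr 1
    omega
  · exact ⟨fun _ => Pi.single_eq_of_ne hT _, fun _ _ => ⟨0, by simp [Pi.single_eq_of_ne hT]⟩⟩

theorem stmt_6_general (h p r m : ℕ) (hph : p < h) (hrm : r ≤ m) :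
    (∀ v ∈ ZRM h p r m, v ≠ 0 → 2 ^ (m - r) ≤ wtH v) ∧
    (∃ v ∈ ZRM h p r m, v ≠ 0 ∧ wtH v = 2 ^ (m - r)) := by
  constructor
  · rintro v ⟨c, hc, rfl⟩ hv
    rw [wtH_anfVec]
    simpa using two_pow_sub_le_card_anfEval_ne_zero (fun T hT => (hc T).1 hT)
      (by rintro rfl; exact hv (funext fun i => by simp [anfVec]))
  · obtain ⟨S, -, hS⟩ := exists_subset_card_eq (s := (univ : Finset (Fin m))) (by simpa using hrm)
    have hp : (2 : ZMod (2 ^ h)) ^ p ≠ 0 := by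
      exact_mod_cast (ZMod.natCast_eq_zero_iff _ _).not.2
        (by rw [Nat.pow_dvd_pow_iff_le_right (by norm_num)]; omega)
    have hwt : wtH (anfVec h m (Pi.single S (2 ^ p))) = 2 ^ (m - r) := by
      simp only [wtH_anfVec, anfEval, sum_pi_single', mem_powerset, ne_eq, ite_eq_right_iff,
        hp, imp_false, not_not]
      rw [card_superset_eq, Fintype.card_fin, hS]
    refine ⟨_, ⟨_, zrmCond_single h p r m hS.le, rfl⟩, fun h0 => ?_, hwt⟩
    exact (pow_pos two_pos _).ne (by simpa [h0, wtH] using hwt)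

/-- The minimum Hamming distance of the linear code `ZRM_{2^h}^p(r,m)` equals `2^{m-r}`. -/
theorem stmt_6 (h p r m : ℕ) (hph : p < h) (hpr : p ≤ r) (hrm : r ≤ m) :
    (∀ v ∈ ZRM h p r m, v ≠ 0 → 2 ^ (m - r) ≤ wtH v) ∧
    (∃ v ∈ ZRM h p r m, v ≠ 0 ∧ wtH v = 2 ^ (m - r)) :=
  stmt_6_general h p r m hph hrm
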